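/- For every integer d ≥ 3, O_d ≤ O_{d-1} + O_{d-2}. -/

import Mathlib

/-- The Macaulay bound `a^⟨t⟩`: writing the (unique, greedy) binomial expansion
`a = C(k(t),t) + C(k(t-1),t-1) + ⋯ + C(k(j),j)` with `k(t) > ⋯ > k(j) ≥ j ≥ 1`,
`macaulay t a = C(k(t)+1,t+1) + C(k(t-1)+1,t) + ⋯ + C(k(j)+1,j+1)`.
(The value at `t = 0` is irrelevant for the definitions below.) -/
def macaulay : ℕ → ℕ → ℕ
  | 0, a => a
  | t+1, a =>
    if a = 0 then 0
    else
      Nat.choose (Nat.findGreatest (fun m => Nat.choose m (t+1) ≤ a) (a + t + 1) + 1) (t+2)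
        + macaulay t (a - Nat.choose
            (Nat.findGreatest (fun m => Nat.choose m (t+1) ≤ a) (a + t + 1)) (t+1))

/-- A finite O-sequence `(a_0, a_1, …, a_s)`, encoded as a nonempty list of
positive integers with `a_0 = 1` and `a_{t+1} ≤ a_t^⟨t⟩` for all `1 ≤ t ≤ s-1`. -/
def IsOSeq (l : List ℕ) : Prop :=
  l ≠ [] ∧ (∀ x ∈ l, 0 < x) ∧ l.getD 0 0 = 1 ∧
    ∀ t : ℕ, 1 ≤ t → t + 1 < l.length → l.getD (t+1) 0 ≤ macaulay t (l.getD t 0)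

/-- `numOSeq d` = the number `O_d` of finite O-sequences of multiplicity `d`. -/
noncomputable def numOSeq (d : ℕ) : ℕ := {l : List ℕ | IsOSeq l ∧ l.sum = d}.ncard

/-- `numASeq d` = the number `A_d` of finite O-sequences of multiplicity `d`
whose last entry is strictly greater than `1`. -/
noncomputable def numASeq (d : ℕ) : ℕ :=
  {l : List ℕ | IsOSeq l ∧ l.sum = d ∧ 1 < l.getLastD 0}.ncard

/-- `numOCond p n k d` = the number `O(p,n,k,d)` of finite O-sequences
`(a_0,…,a_s)` of multiplicity `d` with `s ≤ n`, `a_i = C(p-1+i, i)` for all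
`0 ≤ i ≤ k` (in particular `s ≥ k`), and `a_i < C(p-1+i, i)` for `k < i ≤ s`. -/
noncomputable def numOCond (p n k d : ℕ) : ℕ :=
  {l : List ℕ | IsOSeq l ∧ l.sum = d ∧ l.length - 1 ≤ n ∧ k ≤ l.length - 1 ∧
    (∀ i ≤ k, l.getD i 0 = Nat.choose (p - 1 + i) i) ∧
    (∀ i : ℕ, k < i → i < l.length → l.getD i 0 < Nat.choose (p - 1 + i) i)}.ncard

/- ### Auxiliary lemmas -/

lemma macaulay_zero_right : ∀ t : ℕ, macaulay t 0 = 0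
  | 0 => rfl
  | (t+1) => by simp [macaulay]

lemma one_le_macaulay {t a : ℕ} (ht : 1 ≤ t) (ha : 1 ≤ a) : 1 ≤ macaulay t a := by
  obtain ⟨t, rfl⟩ : ∃ t', t = t' + 1 := ⟨t - 1, by omega⟩
  rw [macaulay, if_neg (by omega)]
  have hk : t + 1 ≤ Nat.findGreatest (fun m => Nat.choose m (t+1) ≤ a) (a + t + 1) :=
    Nat.le_findGreatest (by omega) (by simpa using ha)
  have : 0 < Nat.choose
      (Nat.findGreatest (fun m => Nat.choose m (t+1) ≤ a) (a + t + 1) + 1) (t+2) :=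
    Nat.choose_pos (by omega)
  omega

lemma macaulay_one {t : ℕ} (ht : 1 ≤ t) : macaulay t 1 = 1 := by
  obtain ⟨t, rfl⟩ : ∃ t', t = t' + 1 := ⟨t - 1, by omega⟩
  have hk : Nat.findGreatest (fun m => Nat.choose m (t+1) ≤ 1) (1 + t + 1) = t + 1 := by
    have h1 : t + 1 ≤ Nat.findGreatest (fun m => Nat.choose m (t+1) ≤ 1) (1 + t + 1) :=
      Nat.le_findGreatest (by omega) (by simp)
    have h2 : Nat.findGreatest (fun m => Nat.choose m (t+1) ≤ 1) (1 + t + 1) ≤ 1 + t + 1 :=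
      Nat.findGreatest_le _
    by_contra hne
    have heq : Nat.findGreatest (fun m => Nat.choose m (t+1) ≤ 1) (1 + t + 1) = t + 2 := by omega
    have := Nat.findGreatest_of_ne_zero heq (by omega)
    simp only [Nat.choose_succ_self_right] at this
    omega
  rw [macaulay, if_neg (by omega), hk]
  simp [macaulay_zero_right]

lemma length_le_sum {l : List ℕ} (h : ∀ x ∈ l, 0 < x) : l.length ≤ l.sum := by
  induction l with
  | nil => simp
  | cons a l ih =>
    have h1 := h a (by simp)
    have h2 := ih (fun x hx => h x (by simp [hx]))
    simp only [List.length_cons, List.sum_cons]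
    omega

lemma finite_oseq (e : ℕ) : {l : List ℕ | IsOSeq l ∧ l.sum = e}.Finite := by
  apply Set.Finite.subset ((List.finite_length_le (Fin (e+1)) e).image (List.map Fin.val))
  rintro l ⟨⟨hne, hpos, _, _⟩, hsum⟩
  have hmem : ∀ x ∈ l, x ≤ e := fun x hx =>
    hsum ▸ List.single_le_sum (fun y _ => Nat.zero_le y) x hx
  refine ⟨l.map (fun x => (⟨min x e, by omega⟩ : Fin (e+1))), ?_, ?_⟩
  · simpa using (length_le_sum hpos).trans (le_of_eq hsum)
  · rw [List.map_map]
    conv_rhs => rw [← List.map_id l]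
    refine List.map_congr_left (fun x hx => ?_)
    simp [Nat.min_eq_left (hmem x hx)]

lemma getLastD_eq_getLast {l : List ℕ} (h : l ≠ []) : l.getLastD 0 = l.getLast h := by
  conv_lhs => rw [← List.dropLast_append_getLast h]
  simp

lemma getLastD_mem {l : List ℕ} (h : l ≠ []) : l.getLastD 0 ∈ l := by
  rw [getLastD_eq_getLast h]; exact List.getLast_mem h

lemma sum_dropLast {l : List ℕ} (h : l ≠ []) : l.sum = l.dropLast.sum + l.getLastD 0 := by
  conv_lhs => rw [← List.dropLast_append_getLast h]
  rw [List.sum_append, getLastD_eq_getLast h]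
  simp

lemma getD_dropLast {l : List ℕ} {i : ℕ} (hi : i < l.dropLast.length) :
    l.dropLast.getD i 0 = l.getD i 0 := by
  have hne : l ≠ [] := by rintro rfl; simp at hi
  conv_rhs => rw [← List.dropLast_append_getLast hne]
  rw [List.getD_append _ _ _ _ hi]

lemma getLastD_eq_getD {l : List ℕ} (h : l ≠ []) : l.getLastD 0 = l.getD (l.length - 1) 0 := by
  have hl : 0 < l.length := List.length_pos_iff.mpr h
  rw [getLastD_eq_getLast h, List.getLast_eq_getElem, List.getD_eq_getElem _ _ (by omega)]

lemma pos_getD {l : List ℕ} (hpos : ∀ x ∈ l, 0 < x) {i : ℕ} (hi : i < l.length) :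
    0 < l.getD i 0 := by
  rw [List.getD_eq_getElem _ _ hi]
  exact hpos _ (List.getElem_mem hi)

lemma two_le_length {l : List ℕ} (h : IsOSeq l) (h2 : 2 ≤ l.sum) : 2 ≤ l.length := by
  obtain ⟨hne, hpos, hhead, hgrow⟩ := h
  match l with
  | [] => exact absurd rfl hne
  | [a] =>
    exfalso
    simp only [List.getD_cons_zero] at hhead
    simp only [List.sum_cons, List.sum_nil] at h2
    omega
  | a :: b :: t => simp only [List.length_cons]; omega

lemma ones_propagate {l : List ℕ} (h : IsOSeq l) {i : ℕ} (hi : 1 ≤ i)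
    (h1 : l.getD i 0 = 1) : ∀ j, i ≤ j → j < l.length → l.getD j 0 = 1 := by
  intro j hij hj
  induction j, hij using Nat.le_induction with
  | base => exact h1
  | succ j hij ih =>
    have hj' : j < l.length := by omega
    have hgrow := h.2.2.2 j (by omega) hj
    rw [ih hj', macaulay_one (by omega)] at hgrow
    have := pos_getD h.2.1 hj
    omega

lemma entries_ge_two {l : List ℕ} (h : IsOSeq l) (hlast : 2 ≤ l.getLastD 0)
    {i : ℕ} (hi1 : 1 ≤ i) (hi2 : i < l.length) : 2 ≤ l.getD i 0 := by
  by_contra hcon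
  have h1 : l.getD i 0 = 1 := by
    have := pos_getD h.2.1 hi2
    omega
  have := ones_propagate h hi1 h1 (l.length - 1) (by omega) (by omega)
  rw [getLastD_eq_getD h.1] at hlast
  omega

/-- Dropping the last entry of an O-sequence of length ≥ 2 gives an O-sequence. -/
lemma isOSeq_dropLast {l : List ℕ} (h : IsOSeq l) (h2 : 2 ≤ l.length) :
    IsOSeq l.dropLast := by
  obtain ⟨hne, hpos, hhead, hgrow⟩ := h
  have hlen : l.dropLast.length = l.length - 1 := List.length_dropLast
  refine ⟨?_, ?_, ?_, ?_⟩
  · intro hc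
    rw [← List.length_eq_zero_iff] at hc
    omega
  · intro x hx
    exact hpos x (List.dropLast_subset l hx)
  · rw [getD_dropLast (by omega)]; exact hhead
  · intro t ht1 ht2
    rw [getD_dropLast (by omega), getD_dropLast (by omega)]
    exact hgrow t ht1 (by omega)

/-- The map used on O-sequences with last entry `b ≥ 2`: replace the last entry
by `b - 2` ones. -/
def phi (l : List ℕ) : List ℕ := l.dropLast ++ List.replicate (l.getLastD 0 - 2) 1

lemma getD_replicate_one {k i : ℕ} (h : i < k) : (List.replicate k (1:ℕ)).getD i 0 = 1 := by
  rw [List.getD_eq_getElem _ _ (by simpa using h)]; simp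

lemma phi_isOSeq {l : List ℕ} (h : IsOSeq l) (h2 : 2 ≤ l.sum) (hb : 2 ≤ l.getLastD 0) :
    IsOSeq (phi l) := by
  have hlen2 : 2 ≤ l.length := two_le_length h h2
  obtain ⟨hne, hpos, hhead, hgrow⟩ := h
  have hlen : l.dropLast.length = l.length - 1 := List.length_dropLast
  have hmlen : 1 ≤ l.dropLast.length := by omega
  refine ⟨?_, ?_, ?_, ?_⟩
  · intro hc
    apply congrArg List.length at hc
    simp only [phi, List.length_append, List.length_replicate, List.length_nil] at hc
    omega
  · intro x hx
    rw [phi, List.mem_append] at hx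
    rcases hx with hx | hx
    · exact hpos x (List.dropLast_subset l hx)
    · rw [List.eq_of_mem_replicate hx]; omega
  · rw [phi, List.getD_append _ _ _ _ (by omega), getD_dropLast (by omega)]
    exact hhead
  · intro t ht1 ht2
    rw [phi] at ht2 ⊢
    rw [List.length_append, List.length_replicate] at ht2
    by_cases hc1 : t + 1 < l.dropLast.length
    · rw [List.getD_append _ _ _ _ hc1, List.getD_append _ _ _ _ (by omega),
        getD_dropLast hc1, getD_dropLast (by omega)]
      exact hgrow t ht1 (by omega)
    · rw [List.getD_append_right _ _ _ _ (by omega),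
        getD_replicate_one (by omega)]
      by_cases hc2 : t < l.dropLast.length
      · rw [List.getD_append _ _ _ _ hc2, getD_dropLast hc2]
        exact one_le_macaulay ht1 (pos_getD hpos (by omega))
      · rw [List.getD_append_right _ _ _ _ (by omega),
          getD_replicate_one (by omega), macaulay_one ht1]

lemma phi_sum {l : List ℕ} (hne : l ≠ []) (hpos : ∀ x ∈ l, 0 < x)
    (hb : 2 ≤ l.getLastD 0) : (phi l).sum = l.sum - 2 := by
  have hble : l.getLastD 0 ≤ l.sum :=
    List.single_le_sum (fun y _ => Nat.zero_le y) _ (getLastD_mem hne)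
  have hsum := sum_dropLast hne
  rw [phi, List.sum_append, List.sum_replicate, smul_eq_mul, mul_one]
  omega

/-- Injectivity of `phi` on O-sequences with last entry ≥ 2, asymmetric form. -/
lemma phi_inj_aux {l₁ l₂ : List ℕ} (h₁ : IsOSeq l₁) (h₂ : IsOSeq l₂)
    (hs₁ : 2 ≤ l₁.sum) (hs₂ : 2 ≤ l₂.sum)
    (hb₁ : 2 ≤ l₁.getLastD 0) (hb₂ : 2 ≤ l₂.getLastD 0)
    (hler : l₁.getLastD 0 ≤ l₂.getLastD 0) (heq : phi l₁ = phi l₂) : l₁ = l₂ := by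
  set b₁ := l₁.getLastD 0 with hb₁'
  set b₂ := l₂.getLastD 0 with hb₂'
  have hlen₁ : 2 ≤ l₁.length := two_le_length h₁ hs₁
  have hlen₂ : 2 ≤ l₂.length := two_le_length h₂ hs₂
  have hml₁ : l₁.dropLast.length = l₁.length - 1 := List.length_dropLast
  have hml₂ : l₂.dropLast.length = l₂.length - 1 := List.length_dropLast
  -- rewrite the equation, splitting replicate (b₂-2) = replicate (b₂-b₁) ++ replicate (b₁-2)
  have hsplit : List.replicate (b₂ - 2) (1:ℕ)
      = List.replicate (b₂ - b₁) 1 ++ List.replicate (b₁ - 2) 1 := by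
    rw [← List.replicate_add]
    congr 1
    omega
  rw [phi, phi, hsplit, ← List.append_assoc] at heq
  have hm : l₁.dropLast = l₂.dropLast ++ List.replicate (b₂ - b₁) 1 :=
    List.append_cancel_right heq
  have hd : b₂ - b₁ = 0 := by
    by_contra hc
    -- the last entry of l₁.dropLast would be 1, but entries ≥ 2
    have hlenm : l₁.dropLast.length = l₂.dropLast.length + (b₂ - b₁) := by
      rw [hm, List.length_append, List.length_replicate]
    have hj : l₁.dropLast.length - 1 < l₁.dropLast.length := by omega
    have h1 : l₁.dropLast.getD (l₁.dropLast.length - 1) 0 = 1 := by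
      rw [hm]
      rw [List.getD_append_right _ _ _ _
        (by simp only [List.length_append, List.length_replicate]; omega)]
      apply getD_replicate_one
      simp only [List.length_append, List.length_replicate]
      omega
    rw [getD_dropLast hj] at h1
    have hge2 : 2 ≤ l₁.getD (l₁.dropLast.length - 1) 0 := by
      apply entries_ge_two h₁ hb₁ (by omega) (by omega)
    omega
  have hbeq : b₁ = b₂ := by omega
  rw [hd] at hm
  simp only [List.replicate_zero, List.append_nil] at hm
  have e₁ := List.dropLast_append_getLast h₁.1
  have e₂ := List.dropLast_append_getLast h₂.1
  rw [← e₁, ← e₂, hm, ← getLastD_eq_getLast h₁.1, ← getLastD_eq_getLast h₂.1,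
    ← hb₁', ← hb₂', hbeq]

/-- For every integer `d ≥ 3`, `O_d ≤ O_{d-1} + O_{d-2}`. -/
theorem Od_le_Od_sub_one_add_Od_sub_two (d : ℕ) (hd : 3 ≤ d) :
    numOSeq d ≤ numOSeq (d - 1) + numOSeq (d - 2) := by
  classical
  set S : ℕ → Set (List ℕ) := fun e => {l : List ℕ | IsOSeq l ∧ l.sum = e} with hS
  set S₁ : Set (List ℕ) := {l ∈ S d | l.getLastD 0 = 1} with hS₁
  set S₂ : Set (List ℕ) := {l ∈ S d | 2 ≤ l.getLastD 0} with hS₂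
  have hcover : S d ⊆ S₁ ∪ S₂ := by
    intro l hl
    have hne : l ≠ [] := hl.1.1
    have := hl.1.2.1 _ (getLastD_mem hne)
    rcases Nat.lt_or_ge (l.getLastD 0) 2 with h | h
    · left; exact ⟨hl, by omega⟩
    · right; exact ⟨hl, h⟩
  -- part 1 : dropLast injects S₁ into S (d-1)
  have h1 : S₁.ncard ≤ numOSeq (d - 1) := by
    apply Set.ncard_le_ncard_of_injOn List.dropLast _ _ (finite_oseq (d-1))
    · rintro l ⟨⟨hO, hsum⟩, hlast⟩
      have hlen : 2 ≤ l.length := two_le_length hO (by omega)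
      refine ⟨isOSeq_dropLast hO hlen, ?_⟩
      have := sum_dropLast hO.1
      omega
    · rintro l₁ ⟨⟨hO₁, _⟩, hlast₁⟩ l₂ ⟨⟨hO₂, _⟩, hlast₂⟩ heq
      have e₁ := List.dropLast_append_getLast hO₁.1
      have e₂ := List.dropLast_append_getLast hO₂.1
      rw [← e₁, ← e₂, heq, ← getLastD_eq_getLast hO₁.1, ← getLastD_eq_getLast hO₂.1,
        hlast₁, hlast₂]
  -- part 2 : phi injects S₂ into S (d-2)
  have h2 : S₂.ncard ≤ numOSeq (d - 2) := by
    apply Set.ncard_le_ncard_of_injOn phi _ _ (finite_oseq (d-2))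
    · rintro l ⟨⟨hO, hsum⟩, hlast⟩
      refine ⟨phi_isOSeq hO (by omega) hlast, ?_⟩
      rw [phi_sum hO.1 hO.2.1 hlast, hsum]
    · rintro l₁ ⟨⟨hO₁, hs₁⟩, hb₁⟩ l₂ ⟨⟨hO₂, hs₂⟩, hb₂⟩ heq
      rcases le_total (l₁.getLastD 0) (l₂.getLastD 0) with h | h
      · exact phi_inj_aux hO₁ hO₂ (by omega) (by omega) hb₁ hb₂ h heq
      · exact (phi_inj_aux hO₂ hO₁ (by omega) (by omega) hb₂ hb₁ h heq.symm).symm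
  have hfin : (S₁ ∪ S₂).Finite := by
    apply Set.Finite.subset (finite_oseq d)
    rintro l (⟨hl, _⟩ | ⟨hl, _⟩) <;> exact hl
  calc numOSeq d = (S d).ncard := rfl
    _ ≤ (S₁ ∪ S₂).ncard := Set.ncard_le_ncard hcover hfin
    _ ≤ S₁.ncard + S₂.ncard := Set.ncard_union_le _ _
    _ ≤ numOSeq (d - 1) + numOSeq (d - 2) := add_le_add h1 h2
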